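/- arXiv:1810.11783 — 2 statements merged into one kernel-verified Lean document; each statement's English description precedes it below -/
import Mathlib

section
/- Let f : ℝ^n → ℝ^m, s ∈ ℝ^n, R > 0, and suppose for each t ∈ [0, R] there is a constant L(t) ≥ 0 such that f restricted to the closed ball B[s; t] is L(t)-Lipschitz, with t ↦ L(t) nondecreasing and integrable. Then for all x with ‖x − s‖ ≤ R: ‖f(x) − f(s)‖ ≤ ∫_0^R L(t) dt ≤ L(R) · R. -/
/-!
Parametrize the segment from `s` to `x` by arc length. Between parameters `t ≤ t'` it stays
in `B[s; t']`, so `f` moves by at most `L t' * (t' - t)`. Summing over a uniform partition of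
`[0, ‖x - s‖]` bounds `‖f x - f s‖` by an upper Riemann sum of the monotone function `L`,
which exceeds the integral by at most `(L ‖x - s‖ - L 0) * Δ` for mesh `Δ`; let `Δ → 0`.
-/

open Set Filter Topology Finset Metric

namespace MonotoneOn

variable {L : ℝ → ℝ} {a Δ : ℝ} {N : ℕ}

theorem sum_mul_le_integral (hΔ : 0 ≤ Δ) (hL : MonotoneOn L (Icc a (a + N * Δ))) :
    ∑ i ∈ range N, L (a + i * Δ) * Δ ≤ ∫ t in a..a + N * Δ, L t := by
  have hφ : MonotoneOn (fun u => L (a + Δ * u)) (Icc 0 (0 + N)) := by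
    refine fun u hu v hv huv => hL ?_ ?_ (by gcongr)
    all_goals constructor <;> nlinarith [hu.1, hu.2, hv.1, hv.2]
  have := mul_le_mul_of_nonneg_left hφ.sum_le_integral hΔ
  rw [← smul_eq_mul (a := Δ) (b := ∫ _ in _.._, _),
    intervalIntegral.smul_integral_comp_add_mul, Finset.mul_sum] at this
  simpa [mul_comm] using this

theorem sum_succ_mul_le_integral_add (hΔ : 0 ≤ Δ) (hL : MonotoneOn L (Icc a (a + N * Δ))) :
    ∑ i ∈ range N, L (a + (i + 1 : ℕ) * Δ) * Δ ≤
      (∫ t in a..a + N * Δ, L t) + (L (a + N * Δ) - L a) * Δ := by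
  have htel := Finset.sum_range_sub (fun i : ℕ => L (a + i * Δ) * Δ) N
  rw [Finset.sum_sub_distrib] at htel
  simp only [Nat.cast_zero, zero_mul, add_zero] at htel
  linarith [hL.sum_mul_le_integral hΔ]

end MonotoneOn

theorem dist_le_integral_of_dist_le_mul {α : Type*} [PseudoMetricSpace α] {g : ℝ → α}
    {L : ℝ → ℝ} {a b : ℝ} (hab : a ≤ b) (hL : MonotoneOn L (Icc a b))
    (hg : ∀ t ∈ Icc a b, ∀ t' ∈ Icc a b, t ≤ t' →
      dist (g t) (g t') ≤ L t' * (t' - t)) :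
    dist (g a) (g b) ≤ ∫ t in a..b, L t := by
  have hRiemann : ∀ N : ℕ, 1 ≤ N →
      dist (g a) (g b) ≤ (∫ t in a..b, L t) + (L b - L a) * (b - a) / N := by
    intro N hN
    set Δ := (b - a) / N
    have hΔ : 0 ≤ Δ := div_nonneg (sub_nonneg.2 hab) N.cast_nonneg
    have hend : a + N * Δ = b := by
      simp only [Δ]; field_simp [(Nat.cast_pos.2 hN).ne']; ring
    have hnode : ∀ i ≤ N, a + i * Δ ∈ Icc a b := fun i hi =>
      ⟨le_add_of_nonneg_right (by positivity), hend ▸ by gcongr⟩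
    calc dist (g a) (g b)
        = dist (g (a + (0 : ℕ) * Δ)) (g (a + N * Δ)) := by rw [hend]; simp
      _ ≤ ∑ i ∈ range N, dist (g (a + i * Δ)) (g (a + (i + 1 : ℕ) * Δ)) :=
          dist_le_range_sum_dist (fun i => g (a + i * Δ)) N
      _ ≤ ∑ i ∈ range N, L (a + (i + 1 : ℕ) * Δ) * Δ := by
          refine Finset.sum_le_sum fun i hi => ?_
          have hi := Finset.mem_range.1 hi
          refine (hg _ (hnode i hi.le) _ (hnode (i + 1) hi) (by gcongr; simp)).trans_eq ?_
          push_cast; ring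
      _ ≤ (∫ t in a..a + N * Δ, L t) + (L (a + N * Δ) - L a) * Δ :=
          MonotoneOn.sum_succ_mul_le_integral_add hΔ (hend ▸ hL)
      _ = (∫ t in a..b, L t) + (L b - L a) * (b - a) / N := by rw [hend, mul_div_assoc]
  have hlim : Tendsto (fun N : ℕ => (∫ t in a..b, L t) + (L b - L a) * (b - a) / N) atTop
      (𝓝 ((∫ t in a..b, L t) + 0)) :=
    tendsto_const_nhds.add (tendsto_const_div_atTop_nhds_zero_nat _)
  simpa using ge_of_tendsto hlim (eventually_atTop.2 ⟨1, hRiemann⟩)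

theorem dist_le_integral_of_lipschitzOnWith_closedBall {E F : Type*} [NormedAddCommGroup E]
    [NormedSpace ℝ E] [PseudoMetricSpace F] {f : E → F} {s x : E} {L : ℝ → ℝ}
    (hL : MonotoneOn L (Icc 0 ‖x - s‖)) (hL0 : ∀ t ∈ Icc 0 ‖x - s‖, 0 ≤ L t)
    (hLip : ∀ t ∈ Icc 0 ‖x - s‖, LipschitzOnWith (L t).toNNReal f (closedBall s t)) :
    dist (f s) (f x) ≤ ∫ t in 0..‖x - s‖, L t := by
  rcases eq_or_ne x s with rfl | hxs
  · simp
  set r := ‖x - s‖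
  have hr : r ≠ 0 := norm_ne_zero_iff.2 (sub_ne_zero.2 hxs)
  set u := r⁻¹ • (x - s)
  have hu : ‖u‖ = 1 := by
    rw [norm_smul, norm_inv, norm_norm]
    exact inv_mul_cancel₀ hr
  have hdist : ∀ t t' : ℝ, dist (s + t • u) (s + t' • u) = |t - t'| := by
    intro t t'
    rw [dist_add_left, dist_eq_norm, ← sub_smul, norm_smul, hu, mul_one, Real.norm_eq_abs]
  have hmem : ∀ t t', 0 ≤ t → t ≤ t' → s + t • u ∈ closedBall s t' := by
    intro t t' ht ht'
    have := hdist t 0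
    rw [zero_smul, add_zero, sub_zero, abs_of_nonneg ht] at this
    rwa [mem_closedBall, this]
  have hstep : ∀ t ∈ Icc 0 r, ∀ t' ∈ Icc 0 r, t ≤ t' →
      dist (f (s + t • u)) (f (s + t' • u)) ≤ L t' * (t' - t) := fun t ht t' ht' htt' => by
    have := (hLip t' ht').dist_le_mul _ (hmem t t' ht.1 htt') _ (hmem t' t' ht'.1 le_rfl)
    rwa [Real.coe_toNNReal _ (hL0 t' ht'), hdist, abs_sub_comm,
      abs_of_nonneg (sub_nonneg.2 htt')] at this
  have hend : s + r • u = x := by simp only [u, smul_inv_smul₀ hr, add_sub_cancel]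
  have := dist_le_integral_of_dist_le_mul (b := r) (norm_nonneg _) hL hstep
  rwa [zero_smul, add_zero, hend] at this

theorem stmt_7_general (n m : ℕ)
    (f : (Fin n → ℝ) → (Fin m → ℝ)) (s : Fin n → ℝ) (R : ℝ)
    (L : ℝ → ℝ)
    (hLip : ∀ t ∈ Set.Icc 0 R, 0 ≤ L t ∧
      LipschitzOnWith (Real.toNNReal (L t)) f (Metric.closedBall s t))
    (hmono : MonotoneOn L (Set.Icc 0 R)) :
    ∀ x, ‖x - s‖ ≤ R →
      ‖f x - f s‖ ≤ ∫ t in (0:ℝ)..R, L t ∧ (∫ t in (0:ℝ)..R, L t) ≤ L R * R := by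
  intro x hx
  have hR : 0 ≤ R := (norm_nonneg _).trans hx
  have hsub : Icc 0 ‖x - s‖ ⊆ Icc 0 R := Icc_subset_Icc_right hx
  have hint : IntervalIntegrable L MeasureTheory.volume 0 R :=
    (uIcc_of_le hR ▸ hmono).intervalIntegrable
  constructor
  · calc ‖f x - f s‖ = dist (f s) (f x) := by rw [dist_comm, dist_eq_norm]
      _ ≤ ∫ t in 0..‖x - s‖, L t :=
        dist_le_integral_of_lipschitzOnWith_closedBall (hmono.mono hsub)
          (fun t ht => (hLip t (hsub ht)).1) fun t ht => (hLip t (hsub ht)).2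
      _ ≤ ∫ t in 0..R, L t :=
        intervalIntegral.integral_mono_interval le_rfl (norm_nonneg _) hx
          (MeasureTheory.ae_restrict_of_forall_mem measurableSet_Ioc fun t ht =>
            (hLip t (Ioc_subset_Icc_self ht)).1) hint
  · calc ∫ t in 0..R, L t ≤ ∫ _ in 0..R, L R :=
          intervalIntegral.integral_mono_on hR hint intervalIntegrable_const fun t ht =>
            hmono ht (right_mem_Icc.2 hR) ht.2
      _ = L R * R := by simp [mul_comm]

/-- Theorem 2: integral Lipschitz bound. -/
theorem stmt_7 (n m : ℕ)
    (f : (Fin n → ℝ) → (Fin m → ℝ)) (s : Fin n → ℝ) (R : ℝ) (hR : 0 < R)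
    (L : ℝ → ℝ)
    (hLip : ∀ t ∈ Set.Icc 0 R, 0 ≤ L t ∧
      LipschitzOnWith (Real.toNNReal (L t)) f (Metric.closedBall s t))
    (hmono : MonotoneOn L (Set.Icc 0 R))
    (hint : IntervalIntegrable L MeasureTheory.volume 0 R) :
    ∀ x, ‖x - s‖ ≤ R →
      ‖f x - f s‖ ≤ ∫ t in (0:ℝ)..R, L t ∧ (∫ t in (0:ℝ)..R, L t) ≤ L R * R :=
  stmt_7_general n m f s R L hLip hmono
end

section
/- Let f : ℝ^n → ℝ^K be locally Lipschitz, x ∈ ℝ^n with predicted class y = argmax_j f_j(x), R > 0, and for each j ≠ y let L_j be a Lipschitz constant of g_j = f_y − f_j on the closed ball B[x; R] with L_j > 0. Then for every Δ with ‖Δ‖ < min(R, min_{j≠y} (f_y(x) − f_j(x))/L_j), we have f_y(x + Δ) > f_j(x + Δ) for all j ≠ y. -/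
open scoped NNReal

theorem LipschitzOnWith.pos_of_mul_dist_lt {α : Type*} [PseudoMetricSpace α] {g : α → ℝ}
    {C : ℝ≥0} {s : Set α} (hg : LipschitzOnWith C g s) {a b : α} (ha : a ∈ s) (hb : b ∈ s)
    (h : C * dist b a < g a) : 0 < g b := by
  have hdist : |g b - g a| ≤ C * dist b a := by
    simpa only [Real.dist_eq] using hg.dist_le_mul b hb a ha
  linarith [neg_abs_le (g b - g a)]

theorem stmt_16_general (n K : ℕ) (f : (Fin n → ℝ) → (Fin K → ℝ))
    (x : Fin n → ℝ) (y : Fin K) (R : ℝ)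
    (L : Fin K → ℝ) (hLpos : ∀ j, j ≠ y → 0 < L j)
    (hLip : ∀ j, j ≠ y → LipschitzOnWith (Real.toNNReal (L j))
      (fun z => f z y - f z j) (Metric.closedBall x R)) :
    ∀ Δ : Fin n → ℝ, ‖Δ‖ < R →
      (∀ j, j ≠ y → ‖Δ‖ < (f x y - f x j) / L j) →
      ∀ j, j ≠ y → f (x + Δ) j < f (x + Δ) y := by
  intro Δ hΔR hΔ j hj
  have hL := hLpos j hj
  have hshift : x + Δ ∈ Metric.closedBall x R := by
    rw [Metric.mem_closedBall, dist_self_add_left]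
    exact hΔR.le
  have hcenter : x ∈ Metric.closedBall x R :=
    Metric.mem_closedBall_self ((norm_nonneg Δ).trans hΔR.le)
  have hmargin : Real.toNNReal (L j) * dist (x + Δ) x < f x y - f x j := by
    rw [Real.coe_toNNReal _ hL.le, dist_self_add_left, mul_comm]
    exact (lt_div_iff₀ hL).mp (hΔ j hj)
  exact sub_pos.mp ((hLip j hj).pos_of_mul_dist_lt hcenter hshift hmargin)

/-- Lemma 1: robustness lower bound via local Lipschitz constants. -/
theorem stmt_16 (n K : ℕ) (f : (Fin n → ℝ) → (Fin K → ℝ))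
    (hf : LocallyLipschitz f)
    (x : Fin n → ℝ) (y : Fin K) (R : ℝ) (hR : 0 < R)
    (hy : ∀ j, j ≠ y → f x j < f x y)
    (L : Fin K → ℝ) (hLpos : ∀ j, j ≠ y → 0 < L j)
    (hLip : ∀ j, j ≠ y → LipschitzOnWith (Real.toNNReal (L j))
      (fun z => f z y - f z j) (Metric.closedBall x R)) :
    ∀ Δ : Fin n → ℝ, ‖Δ‖ < R →
      (∀ j, j ≠ y → ‖Δ‖ < (f x y - f x j) / L j) →
      ∀ j, j ≠ y → f (x + Δ) j < f (x + Δ) y :=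
  stmt_16_general n K f x y R L hLpos hLip
end
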